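/- Let Σxx ∈ ℝ^{dx×dx} and Σyy ∈ ℝ^{dy×dy} be symmetric positive definite with all eigenvalues in the interval [γ, 1] for some γ > 0, let Σxy ∈ ℝ^{dx×dy}, set ρ1 = ‖Σxx^{-1/2} Σxy Σyy^{-1/2}‖, and let λ > ρ1. Define the symmetric block matrix A_λ = [[λ Σxx, −Σxy],[−Σxyᵀ, λ Σyy]] ∈ ℝ^{(dx+dy)×(dx+dy)}. Then A_λ is positive definite, its smallest eigenvalue is at least (λ − ρ1)·γ, and its largest eigenvalue is at most λ + ρ1. -/

import Mathlib

open Matrix Finset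

/-- Euclidean norm of a vector in `ℝ^d`. -/
noncomputable def vnorm {n : Type*} [Fintype n] (x : n → ℝ) : ℝ := Real.sqrt (x ⬝ᵥ x)

/-- Spectral (operator) norm of a real matrix: the supremum of `‖A x‖` over unit vectors `x`. -/
noncomputable def specNorm {m n : Type*} [Fintype m] [Fintype n] (A : Matrix m n ℝ) : ℝ :=
  sSup {c : ℝ | ∃ x : n → ℝ, vnorm x = 1 ∧ c = vnorm (A.mulVec x)}

/-- The square root of a positive semidefinite matrix, as `Matrix.PosSemidef.sqrt` was defined
in the older Mathlib (removed since). -/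
noncomputable def posSemidefSqrt {n : Type*} [Fintype n] [DecidableEq n]
    {A : Matrix n n ℝ} (hA : A.PosSemidef) : Matrix n n ℝ :=
  hA.1.eigenvectorUnitary.1 * diagonal ((↑) ∘ (√·) ∘ hA.1.eigenvalues) *
    (star hA.1.eigenvectorUnitary : Matrix n n ℝ)

/-! Write `Σxx = P²`, `Σyy = Q²` with `P`, `Q` the symmetric square roots, and `T = P⁻¹ Σxy Q⁻¹`.
The cross term of the quadratic form of `A_λ` at `z = (u, v)` is `-2 ⟨P u, T Q v⟩`, which by
Cauchy–Schwarz and AM–GM is at most `ρ₁ (⟨u, Σxx u⟩ + ⟨v, Σyy v⟩)` in absolute value. So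
`⟨z, A_λ z⟩` lies between `(λ ∓ ρ₁)(⟨u, Σxx u⟩ + ⟨v, Σyy v⟩)`, and the Rayleigh bounds
`γ |w|² ≤ ⟨w, Σ w⟩ ≤ |w|²` for the diagonal blocks give
`(λ - ρ₁) γ |z|² ≤ ⟨z, A_λ z⟩ ≤ (λ + ρ₁) |z|²`; both claims follow from this. -/

section Vnorm

variable {n : Type*} [Fintype n]

lemma vnorm_eq_norm_toLp (x : n → ℝ) : vnorm x = ‖WithLp.toLp 2 x‖ := by
  rw [vnorm, EuclideanSpace.norm_eq]
  simp [dotProduct, sq]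

lemma vnorm_nonneg (x : n → ℝ) : 0 ≤ vnorm x := Real.sqrt_nonneg _

lemma vnorm_sq (x : n → ℝ) : vnorm x ^ 2 = x ⬝ᵥ x :=
  Real.sq_sqrt (Finset.sum_nonneg fun i _ => mul_self_nonneg (x i))

lemma dotProduct_self_pos_of_ne_zero {x : n → ℝ} (hx : x ≠ 0) : 0 < x ⬝ᵥ x := by
  simpa [star_trivial] using dotProduct_star_self_pos_iff.mpr hx

lemma vnorm_pos {x : n → ℝ} (hx : x ≠ 0) : 0 < vnorm x :=
  Real.sqrt_pos.mpr (dotProduct_self_pos_of_ne_zero hx)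

lemma vnorm_smul (c : ℝ) (x : n → ℝ) : vnorm (c • x) = |c| * vnorm x := by
  rw [vnorm_eq_norm_toLp, vnorm_eq_norm_toLp, WithLp.toLp_smul, norm_smul, Real.norm_eq_abs]

lemma abs_dotProduct_le_vnorm_mul_vnorm (x y : n → ℝ) : |x ⬝ᵥ y| ≤ vnorm x * vnorm y := by
  have := abs_real_inner_le_norm (WithLp.toLp 2 y) (WithLp.toLp 2 x)
  rwa [EuclideanSpace.inner_eq_star_dotProduct, ← vnorm_eq_norm_toLp, ← vnorm_eq_norm_toLp,
    mul_comm (vnorm y)] at this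

lemma vnorm_mulVec_sq {m : Type*} [Fintype m] (P : Matrix m n ℝ) (x : n → ℝ) :
    vnorm (P *ᵥ x) ^ 2 = x ⬝ᵥ ((Pᵀ * P) *ᵥ x) := by
  rw [vnorm_sq, ← mulVec_mulVec, dotProduct_mulVec x Pᵀ, vecMul_transpose]

end Vnorm

section SpecNorm

variable {m n : Type*} [Fintype m] [Fintype n]

open scoped Matrix.Norms.L2Operator in
lemma specNorm_bddAbove (A : Matrix m n ℝ) :
    BddAbove {c : ℝ | ∃ x : n → ℝ, vnorm x = 1 ∧ c = vnorm (A *ᵥ x)} := by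
  classical
  refine ⟨‖A‖, ?_⟩
  rintro c ⟨x, hx, rfl⟩
  rw [vnorm_eq_norm_toLp] at hx
  simpa [vnorm_eq_norm_toLp, hx] using A.l2_opNorm_mulVec (WithLp.toLp 2 x)

lemma specNorm_nonneg (A : Matrix m n ℝ) : 0 ≤ specNorm A :=
  Real.sSup_nonneg fun _ ⟨_, _, hc⟩ => hc ▸ vnorm_nonneg _

lemma vnorm_mulVec_le_specNorm_mul (A : Matrix m n ℝ) (x : n → ℝ) :
    vnorm (A *ᵥ x) ≤ specNorm A * vnorm x := by
  rcases eq_or_ne x 0 with rfl | hx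
  · simp [vnorm]
  have hx' := vnorm_pos hx
  have hunit : vnorm ((vnorm x)⁻¹ • x) = 1 := by
    rw [vnorm_smul, abs_of_pos (inv_pos.mpr hx'), inv_mul_cancel₀ hx'.ne']
  have hle := le_csSup (specNorm_bddAbove A) ⟨_, hunit, rfl⟩
  rw [mulVec_smul, vnorm_smul, abs_of_pos (inv_pos.mpr hx'), inv_mul_le_iff₀ hx'] at hle
  rwa [mul_comm]

end SpecNorm

namespace Matrix

section Rayleigh

variable {n : Type*} [Fintype n]

lemma IsHermitian.mul_dotProduct_self_le_of_eigen_ge [DecidableEq n] {M : Matrix n n ℝ}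
    (hM : M.IsHermitian) {c : ℝ}
    (h : ∀ μ : ℝ, (∃ v : n → ℝ, v ≠ 0 ∧ M *ᵥ v = μ • v) → c ≤ μ) (v : n → ℝ) :
    c * (v ⬝ᵥ v) ≤ v ⬝ᵥ (M *ᵥ v) := by
  have hshift : ∀ w : n → ℝ, (M - c • 1) *ᵥ w = M *ᵥ w - c • w := fun w => by
    rw [sub_mulVec, smul_mulVec, one_mulVec]
  have hN : (M - c • 1).IsHermitian := hM.sub (by simp [IsHermitian])
  have hpsd : (M - c • 1).PosSemidef := by
    refine hN.posSemidef_iff_eigenvalues_nonneg.mpr fun i => ?_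
    show 0 ≤ hN.eigenvalues i
    have hb := hN.mulVec_eigenvectorBasis i
    rw [hshift] at hb
    have hMb : M *ᵥ ⇑(hN.eigenvectorBasis i) =
        (hN.eigenvalues i + c) • ⇑(hN.eigenvectorBasis i) := by
      rw [add_smul]
      linear_combination (norm := module) hb
    have hne : (⇑(hN.eigenvectorBasis i) : n → ℝ) ≠ 0 := fun h0 =>
      hN.eigenvectorBasis.orthonormal.ne_zero i (by ext j; exact congrFun h0 j)
    linarith [h _ ⟨_, hne, hMb⟩]
  have := hpsd.dotProduct_mulVec_nonneg v
  rw [star_trivial, hshift, dotProduct_sub, dotProduct_smul, smul_eq_mul] at this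
  linarith

lemma IsHermitian.quadratic_bounds_of_eigen_bounds [DecidableEq n] {M : Matrix n n ℝ}
    (hM : M.IsHermitian) {c C : ℝ}
    (h : ∀ μ : ℝ, (∃ v : n → ℝ, v ≠ 0 ∧ M *ᵥ v = μ • v) → c ≤ μ ∧ μ ≤ C) (v : n → ℝ) :
    c * (v ⬝ᵥ v) ≤ v ⬝ᵥ (M *ᵥ v) ∧ v ⬝ᵥ (M *ᵥ v) ≤ C * (v ⬝ᵥ v) := by
  refine ⟨hM.mul_dotProduct_self_le_of_eigen_ge (fun μ hμ => (h μ hμ).1) v, ?_⟩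
  have hneg : ∀ μ : ℝ, (∃ w : n → ℝ, w ≠ 0 ∧ (-M) *ᵥ w = μ • w) → -C ≤ μ := by
    rintro μ ⟨w, hw, hMw⟩
    have := (h (-μ) ⟨w, hw, by rw [neg_smul, ← hMw, neg_mulVec, neg_neg]⟩).2
    linarith
  have := hM.neg.mul_dotProduct_self_le_of_eigen_ge hneg v
  rw [neg_mulVec, dotProduct_neg] at this
  linarith

lemma eigen_bounds_of_quadratic_bounds {M : Matrix n n ℝ} {c C : ℝ}
    (h : ∀ v : n → ℝ, c * (v ⬝ᵥ v) ≤ v ⬝ᵥ (M *ᵥ v) ∧ v ⬝ᵥ (M *ᵥ v) ≤ C * (v ⬝ᵥ v)) {μ : ℝ}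
    (hμ : ∃ v : n → ℝ, v ≠ 0 ∧ M *ᵥ v = μ • v) : c ≤ μ ∧ μ ≤ C := by
  obtain ⟨v, hv, hMv⟩ := hμ
  obtain ⟨hlow, hup⟩ := h v
  rw [hMv, dotProduct_smul, smul_eq_mul] at hlow hup
  exact ⟨le_of_mul_le_mul_right hlow (dotProduct_self_pos_of_ne_zero hv),
    le_of_mul_le_mul_right hup (dotProduct_self_pos_of_ne_zero hv)⟩

lemma IsHermitian.posDef_of_quadratic_lower_bound {M : Matrix n n ℝ} (hM : M.IsHermitian)
    {c : ℝ} (hc : 0 < c) (h : ∀ v : n → ℝ, c * (v ⬝ᵥ v) ≤ v ⬝ᵥ (M *ᵥ v)) : M.PosDef := by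
  refine PosDef.of_dotProduct_mulVec_pos hM fun v hv => ?_
  rw [star_trivial]
  exact (mul_pos hc (dotProduct_self_pos_of_ne_zero hv)).trans_le (h v)

end Rayleigh

end Matrix

section Sqrt

variable {n : Type*} [Fintype n] [DecidableEq n] {A : Matrix n n ℝ}

lemma posSemidefSqrt_mul_self (hA : A.PosSemidef) : posSemidefSqrt hA * posSemidefSqrt hA = A := by
  have hU : (star hA.1.eigenvectorUnitary : Matrix n n ℝ) * hA.1.eigenvectorUnitary.1 = 1 :=
    Unitary.coe_star_mul_self _
  have hD : diagonal ((↑) ∘ (√·) ∘ hA.1.eigenvalues) * diagonal ((↑) ∘ (√·) ∘ hA.1.eigenvalues)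
      = diagonal ((RCLike.ofReal : ℝ → ℝ) ∘ hA.1.eigenvalues) := by
    rw [diagonal_mul_diagonal]
    congr 1
    funext i
    simp [Real.mul_self_sqrt (hA.eigenvalues_nonneg i)]
  conv_rhs => rw [hA.1.spectral_theorem, Unitary.conjStarAlgAut_apply]
  have hassoc : ∀ U D V : Matrix n n ℝ, U * D * V * (U * D * V) = U * (D * (V * U) * D) * V := by
    intro U D V
    simp only [Matrix.mul_assoc]
  rw [posSemidefSqrt, hassoc, hU, Matrix.mul_one, hD, Matrix.mul_assoc]

lemma posSemidefSqrt_transpose (hA : A.PosSemidef) : (posSemidefSqrt hA)ᵀ = posSemidefSqrt hA := by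
  rw [← conjTranspose_eq_transpose_of_trivial]
  simp [posSemidefSqrt, Matrix.star_eq_conjTranspose, Matrix.mul_assoc]

lemma Matrix.PosDef.isUnit_det_posSemidefSqrt (hA : A.PosDef) :
    IsUnit (posSemidefSqrt hA.posSemidef).det :=
  isUnit_of_mul_isUnit_left <| by
    rw [← det_mul, posSemidefSqrt_mul_self]
    exact hA.isUnit.map detMonoidHom

end Sqrt

section Block

variable {k l m n : Type*} [Fintype k] [Fintype l] [Fintype m] [Fintype n]

lemma abs_dotProduct_transpose_mul_mul_mulVec_le (P : Matrix k m ℝ) (T : Matrix k l ℝ)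
    (Q : Matrix l n ℝ) (u : m → ℝ) (v : n → ℝ) :
    |u ⬝ᵥ ((Pᵀ * T * Q) *ᵥ v)| ≤
      specNorm T * (u ⬝ᵥ ((Pᵀ * P) *ᵥ u) + v ⬝ᵥ ((Qᵀ * Q) *ᵥ v)) / 2 := by
  have hsplit : u ⬝ᵥ ((Pᵀ * T * Q) *ᵥ v) = (P *ᵥ u) ⬝ᵥ (T *ᵥ (Q *ᵥ v)) := by
    rw [← mulVec_mulVec, ← mulVec_mulVec, dotProduct_mulVec, vecMul_transpose]
  have hT := vnorm_mulVec_le_specNorm_mul T (Q *ᵥ v)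
  have hT0 := specNorm_nonneg T
  rw [hsplit, ← vnorm_mulVec_sq, ← vnorm_mulVec_sq]
  calc |(P *ᵥ u) ⬝ᵥ (T *ᵥ (Q *ᵥ v))|
      ≤ vnorm (P *ᵥ u) * vnorm (T *ᵥ (Q *ᵥ v)) := abs_dotProduct_le_vnorm_mul_vnorm _ _
    _ ≤ vnorm (P *ᵥ u) * (specNorm T * vnorm (Q *ᵥ v)) := by gcongr; exact vnorm_nonneg _
    _ ≤ specNorm T * (vnorm (P *ᵥ u) ^ 2 + vnorm (Q *ᵥ v) ^ 2) / 2 := by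
      nlinarith [mul_nonneg hT0 (sq_nonneg (vnorm (P *ᵥ u) - vnorm (Q *ᵥ v)))]

lemma dotProduct_fromBlocks_shifted_mulVec (a : ℝ) (A : Matrix m m ℝ) (B : Matrix m n ℝ)
    (D : Matrix n n ℝ) (u : m → ℝ) (v : n → ℝ) :
    Sum.elim u v ⬝ᵥ (fromBlocks (a • A) (-B) (-Bᵀ) (a • D) *ᵥ Sum.elim u v) =
      a * (u ⬝ᵥ (A *ᵥ u)) + a * (v ⬝ᵥ (D *ᵥ v)) - 2 * (u ⬝ᵥ (B *ᵥ v)) := by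
  have hBt : v ⬝ᵥ (Bᵀ *ᵥ u) = u ⬝ᵥ (B *ᵥ v) := by
    rw [dotProduct_mulVec, vecMul_transpose, dotProduct_comm]
  rw [fromBlocks_mulVec, sumElim_dotProduct_sumElim]
  simp only [Sum.elim_comp_inl, Sum.elim_comp_inr, dotProduct_add, neg_mulVec, dotProduct_neg,
    smul_mulVec, dotProduct_smul, smul_eq_mul, hBt]
  ring

lemma fromBlocks_shifted_quadratic_bounds {A : Matrix m m ℝ} {B : Matrix m n ℝ}
    {D : Matrix n n ℝ} {a ρ γ Γ : ℝ} (hρ : 0 ≤ ρ) (hρa : ρ ≤ a)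
    (hA : ∀ u, γ * (u ⬝ᵥ u) ≤ u ⬝ᵥ (A *ᵥ u) ∧ u ⬝ᵥ (A *ᵥ u) ≤ Γ * (u ⬝ᵥ u))
    (hD : ∀ v, γ * (v ⬝ᵥ v) ≤ v ⬝ᵥ (D *ᵥ v) ∧ v ⬝ᵥ (D *ᵥ v) ≤ Γ * (v ⬝ᵥ v))
    (hB : ∀ u v, |u ⬝ᵥ (B *ᵥ v)| ≤ ρ * (u ⬝ᵥ (A *ᵥ u) + v ⬝ᵥ (D *ᵥ v)) / 2)
    (z : m ⊕ n → ℝ) :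
    (a - ρ) * γ * (z ⬝ᵥ z) ≤ z ⬝ᵥ (fromBlocks (a • A) (-B) (-Bᵀ) (a • D) *ᵥ z) ∧
      z ⬝ᵥ (fromBlocks (a • A) (-B) (-Bᵀ) (a • D) *ᵥ z) ≤ (a + ρ) * Γ * (z ⬝ᵥ z) := by
  obtain ⟨u, v, rfl⟩ : ∃ u v, z = Sum.elim u v := ⟨_, _, (Sum.elim_comp_inl_inr z).symm⟩
  rw [dotProduct_fromBlocks_shifted_mulVec, sumElim_dotProduct_sumElim]
  obtain ⟨hAl, hAu⟩ := hA u
  obtain ⟨hDl, hDu⟩ := hD v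
  obtain ⟨hBl, hBu⟩ := abs_le.mp (hB u v)
  have hlow : γ * (u ⬝ᵥ u + v ⬝ᵥ v) ≤ u ⬝ᵥ (A *ᵥ u) + v ⬝ᵥ (D *ᵥ v) := by linarith
  have hup : u ⬝ᵥ (A *ᵥ u) + v ⬝ᵥ (D *ᵥ v) ≤ Γ * (u ⬝ᵥ u + v ⬝ᵥ v) := by linarith
  constructor
  · nlinarith [mul_le_mul_of_nonneg_left hlow (sub_nonneg.mpr hρa)]
  · nlinarith [mul_le_mul_of_nonneg_left hup (add_nonneg (hρ.trans hρa) hρ)]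

end Block

/-- the shifted matrix `A_λ = [[λΣxx, −Σxy],[−Σxyᵀ, λΣyy]]` is positive
definite with eigenvalues in `[(λ−ρ₁)γ, λ+ρ₁]`. -/
theorem stmt_9 {dx dy : ℕ}
    (Sxx : Matrix (Fin dx) (Fin dx) ℝ) (Syy : Matrix (Fin dy) (Fin dy) ℝ)
    (Sxy : Matrix (Fin dx) (Fin dy) ℝ)
    (hx : Sxx.PosDef) (hy : Syy.PosDef)
    (γ : ℝ) (hγ : 0 < γ)
    (hevx : ∀ μ : ℝ, (∃ v : Fin dx → ℝ, v ≠ 0 ∧ Sxx.mulVec v = μ • v) → γ ≤ μ ∧ μ ≤ 1)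
    (hevy : ∀ μ : ℝ, (∃ v : Fin dy → ℝ, v ≠ 0 ∧ Syy.mulVec v = μ • v) → γ ≤ μ ∧ μ ≤ 1)
    (ρ1 : ℝ) (hρ1 : ρ1 = specNorm ((posSemidefSqrt hx.posSemidef)⁻¹ * Sxy * (posSemidefSqrt hy.posSemidef)⁻¹))
    (lam : ℝ) (hlam : ρ1 < lam)
    (Alam : Matrix (Fin dx ⊕ Fin dy) (Fin dx ⊕ Fin dy) ℝ)
    (hA : Alam = Matrix.fromBlocks (lam • Sxx) (-Sxy) (-Sxyᵀ) (lam • Syy)) :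
    Alam.PosDef ∧
    ∀ μ : ℝ, (∃ v : Fin dx ⊕ Fin dy → ℝ, v ≠ 0 ∧ Alam.mulVec v = μ • v) →
      (lam - ρ1) * γ ≤ μ ∧ μ ≤ lam + ρ1 := by
  set P := posSemidefSqrt hx.posSemidef
  set Q := posSemidefSqrt hy.posSemidef
  have hSxy : Pᵀ * (P⁻¹ * Sxy * Q⁻¹) * Q = Sxy := by
    rw [posSemidefSqrt_transpose, Matrix.mul_assoc, nonsing_inv_mul_cancel_right _ _
      hy.isUnit_det_posSemidefSqrt, mul_nonsing_inv_cancel_left _ _ hx.isUnit_det_posSemidefSqrt]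
  have hcross : ∀ u v, |u ⬝ᵥ (Sxy *ᵥ v)| ≤ ρ1 * (u ⬝ᵥ (Sxx *ᵥ u) + v ⬝ᵥ (Syy *ᵥ v)) / 2 := by
    intro u v
    have := abs_dotProduct_transpose_mul_mul_mulVec_le P (P⁻¹ * Sxy * Q⁻¹) Q u v
    rwa [hSxy, posSemidefSqrt_transpose, posSemidefSqrt_transpose, posSemidefSqrt_mul_self,
      posSemidefSqrt_mul_self, ← hρ1] at this
  have hbounds := fromBlocks_shifted_quadratic_bounds (hρ1 ▸ specNorm_nonneg _) hlam.le
    (hx.1.quadratic_bounds_of_eigen_bounds hevx) (hy.1.quadratic_bounds_of_eigen_bounds hevy)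
    hcross
  simp only [mul_one, ← hA] at hbounds
  have hherm : Alam.IsHermitian :=
    hA ▸ (hx.1.smul (.all lam)).fromBlocks (by simp) (hy.1.smul (.all lam))
  exact ⟨hherm.posDef_of_quadratic_lower_bound (mul_pos (sub_pos.mpr hlam) hγ)
    fun z => (hbounds z).1, fun μ hμ => eigen_bounds_of_quadratic_bounds hbounds hμ⟩
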